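/- Dual Vertex Insertion preserves the exterior function: Let X and Y be finite alphabets and let Φ, Φ̂ : X × Y → ℂ be dual with respect to the coupling alphabet Y. Let G be an NFG and let e be an internal edge of G with alphabet X joining vertices u and v. Form the NFG G' by replacing e with the path u —(X)— Φ —(Y)— Φ̂ —(X)— v, i.e., insert two new vertices carrying the local functions Φ and Φ̂, where the new internal edge between them carries alphabet Y and the edges attaching them to u and to v carry alphabet X. Then Z_{G'} = Z_G. -/

import Mathlib

open scoped BigOperators Classical

/-! # Normal factor graphs -/

/-- `Inc ends extEnd v e` means edge `e` is incident to vertex `v`. -/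
def Inc {V Ei Ee : Type} (ends : Ei → V × V) (extEnd : Ee → V) (v : V) :
    Ei ⊕ Ee → Prop
  | .inl i => (ends i).1 = v ∨ (ends i).2 = v
  | .inr j => extEnd j = v

/-- Combine an internal and an external configuration into a configuration on all edges. -/
def combine {Ei Ee : Type} {X : Ei ⊕ Ee → Type}
    (xi : ∀ i : Ei, X (.inl i)) (xe : ∀ j : Ee, X (.inr j)) : ∀ e, X e
  | .inl i => xi i
  | .inr j => xe j

/-- The exterior function realized by a normal factor graph. -/
noncomputable def Zfun {V Ei Ee : Type} [Fintype V] [Fintype Ei]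
    (X : Ei ⊕ Ee → Type) [∀ e, Fintype (X e)]
    (ends : Ei → V × V) (extEnd : Ee → V)
    (f : ∀ v : V, ((e : {e : Ei ⊕ Ee // Inc ends extEnd v e}) → X e.1) → ℂ)
    (xe : ∀ j : Ee, X (.inr j)) : ℂ :=
  ∑ xi : ∀ i : Ei, X (.inl i), ∏ v : V, f v fun e => combine xi xe e.1

/-! ## Insertion of a dual pair of vertices into an internal edge `e0`

The new graph `G'` has vertices `V ⊕ Bool` (the new vertex `.inr true` carries `Φ`, the new
vertex `.inr false` carries `Φ̂`), and internal edges `Ei ⊕ Bool`:  `.inl e0` is reused as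
the edge joining `u = (ends e0).1` to the `Φ`-vertex (alphabet `X (.inl e0)`), `.inr true`
is the coupling edge joining the `Φ`-vertex to the `Φ̂`-vertex (alphabet `Y`), and
`.inr false` joins the `Φ̂`-vertex to `v = (ends e0).2` (alphabet `X (.inl e0)`). -/

section DualInsert

variable {V Ei Ee : Type} (X : Ei ⊕ Ee → Type) (Y : Type)
  (ends : Ei → V × V) (extEnd : Ee → V) (e0 : Ei)

/-- Edge alphabets of the graph with the dual pair inserted. -/
def Xins : (Ei ⊕ Bool) ⊕ Ee → Type
  | .inl (.inl i) => X (.inl i)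
  | .inl (.inr true) => Y
  | .inl (.inr false) => X (.inl e0)
  | .inr j => X (.inr j)

instance XinsFintype [∀ e, Fintype (X e)] [Fintype Y] : ∀ e, Fintype (Xins X Y e0 e)
  | .inl (.inl i) => inferInstanceAs (Fintype (X (.inl i)))
  | .inl (.inr true) => inferInstanceAs (Fintype Y)
  | .inl (.inr false) => inferInstanceAs (Fintype (X (.inl e0)))
  | .inr j => inferInstanceAs (Fintype (X (.inr j)))

/-- Endpoints of the internal edges of the new graph. -/
noncomputable def endsIns : Ei ⊕ Bool → (V ⊕ Bool) × (V ⊕ Bool)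
  | .inl i => if i = e0 then (.inl (ends e0).1, .inr true)
              else (.inl (ends i).1, .inl (ends i).2)
  | .inr true => (.inr true, .inr false)
  | .inr false => (.inr false, .inl (ends e0).2)

/-- Attachment of the external edges of the new graph. -/
def extEndIns : Ee → V ⊕ Bool := fun j => .inl (extEnd j)

/-- Restriction of a configuration on the new edges incident to an original vertex `a`
to a configuration on the original edges incident to `a`. -/
noncomputable def restrictIns (a : V)
    (x : (e : {e : (Ei ⊕ Bool) ⊕ Ee //
        Inc (endsIns ends e0) (extEndIns extEnd) (.inl a) e}) → Xins X Y e0 e.1) :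
    (e : {e : Ei ⊕ Ee // Inc ends extEnd a e}) → X e.1 :=
  fun e =>
    match e with
    | ⟨.inl i, h⟩ =>
        if hi : i = e0 then by
          subst hi
          exact
            if h1 : (ends i).1 = a then
              x ⟨.inl (.inl i), Or.inl (by simp [endsIns, h1])⟩
            else
              x ⟨.inl (.inr false), Or.inr (by
                simp [endsIns, h.resolve_left h1])⟩
        else
          x ⟨.inl (.inl i), by
            rcases h with h | h
            · exact Or.inl (by simp [endsIns, hi, h])
            · exact Or.inr (by simp [endsIns, hi, h])⟩
    | ⟨.inr j, h⟩ => x ⟨.inr j, congrArg (Sum.inl : V → V ⊕ Bool) h⟩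

/-- The local functions of the new graph: original vertices keep their local functions,
and the two new vertices carry `Φ` and `Φ̂` respectively. -/
noncomputable def fIns
    (f : ∀ v : V, ((e : {e : Ei ⊕ Ee // Inc ends extEnd v e}) → X e.1) → ℂ)
    (Φ Φhat : X (.inl e0) → Y → ℂ) :
    ∀ w : V ⊕ Bool,
      ((e : {e : (Ei ⊕ Bool) ⊕ Ee //
          Inc (endsIns ends e0) (extEndIns extEnd) w e}) → Xins X Y e0 e.1) → ℂ
  | .inl a => fun x => f a (restrictIns X Y ends extEnd e0 a x)
  | .inr true => fun x =>
      Φ (x ⟨.inl (.inl e0), Or.inr (by simp [endsIns])⟩)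
        (x ⟨.inl (.inr true), Or.inl rfl⟩)
  | .inr false => fun x =>
      Φhat (x ⟨.inl (.inr false), Or.inl rfl⟩)
        (x ⟨.inl (.inr true), Or.inr rfl⟩)

end DualInsert

/- Configurations of `G'` are triples `(xi, y, z)` of a configuration `xi` of `G`, a
coupling symbol `y` on the edge between `Φ` and `Φ̂`, and a symbol `z` on the edge from `Φ̂` to `v`;
the edge from `u` to `Φ` keeps the value `xi e0`. Summing over `y` first contracts `Φ` with `Φ̂`
to `δ(xi e0, z)`, which forces `z = xi e0`, and then the summand is the summand of `Z_G`. -/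

theorem sum_sum_mul_of_dual {R α β : Type*} [CommSemiring R] [Fintype α] [Fintype β]
    [DecidableEq α] (Φ Φhat : α → β → R)
    (hdual : ∀ x x', ∑ y, Φ x y * Φhat x' y = if x = x' then 1 else 0) (g : α → R) (x : α) :
    ∑ z, ∑ y, g z * (Φ x y * Φhat z y) = g x := by
  simp only [← Finset.mul_sum, hdual, mul_ite, mul_one, mul_zero, Finset.sum_ite_eq,
    Finset.mem_univ, if_true]

section DualInsertConfig

variable {V Ei Ee : Type} (X : Ei ⊕ Ee → Type) (Y : Type)
  (ends : Ei → V × V) (extEnd : Ee → V) (e0 : Ei)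

def cfgIns (xi : ∀ i : Ei, X (.inl i)) (y : Y) (z : X (.inl e0)) :
    ∀ i : Ei ⊕ Bool, Xins X Y e0 (.inl i)
  | .inl i => xi i
  | .inr true => y
  | .inr false => z

def cfgInsEquiv : ((∀ i : Ei, X (.inl i)) × Y × X (.inl e0)) ≃
    (∀ i : Ei ⊕ Bool, Xins X Y e0 (.inl i)) where
  toFun p := cfgIns X Y e0 p.1 p.2.1 p.2.2
  invFun q := (fun i => q (.inl i), q (.inr true), q (.inr false))
  left_inv _ := rfl
  right_inv q := by
    funext i
    rcases i with i | (_ | _) <;> rfl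

/-- `restrictIns` reads `e0` as `u`'s new edge when `a = u` and as `v`'s new edge otherwise;
the latter is harmless when `a` is not an endpoint of `e0`. -/
theorem restrictIns_combine_cfgIns (a : V) (xi : ∀ i : Ei, X (.inl i)) (y : Y)
    (z : X (.inl e0)) (xe : ∀ j : Ee, X (.inr j)) :
    restrictIns X Y ends extEnd e0 a
        (fun e : {e // Inc (endsIns ends e0) (extEndIns extEnd) (.inl a) e} =>
          combine (cfgIns X Y e0 xi y z) xe e.1)
      = fun e : {e // Inc ends extEnd a e} => combine
          (Function.update xi e0 (if (ends e0).1 = a then xi e0 else z)) xe e.1 := by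
  funext ⟨e, he⟩
  rcases e with i | j
  · by_cases hi : i = e0
    · subst hi
      by_cases hu : (ends i).1 = a <;> simp [restrictIns, hu, combine, cfgIns]
    · simp [restrictIns, hi, combine, cfgIns]
  · rfl

theorem prod_fIns_combine_cfgIns [Fintype V]
    (f : ∀ v : V, ((e : {e : Ei ⊕ Ee // Inc ends extEnd v e}) → X e.1) → ℂ)
    (Φ Φhat : X (.inl e0) → Y → ℂ) (xi : ∀ i : Ei, X (.inl i)) (y : Y) (z : X (.inl e0))
    (xe : ∀ j : Ee, X (.inr j)) :
    ∏ w, fIns X Y ends extEnd e0 f Φ Φhat w (fun e => combine (cfgIns X Y e0 xi y z) xe e.1)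
      = (∏ a, f a fun e => combine
          (Function.update xi e0 (if (ends e0).1 = a then xi e0 else z)) xe e.1)
        * (Φ (xi e0) y * Φhat z y) := by
  rw [Fintype.prod_sum_type, Fintype.prod_bool]
  congr 1
  exact Finset.prod_congr rfl fun a _ => congrArg (f a) (restrictIns_combine_cfgIns ..)

theorem Zfun_ins_eq_sum_cfgIns [Fintype V] [Fintype Ei] [∀ e, Fintype (X e)] [Fintype Y]
    (f : ∀ v : V, ((e : {e : Ei ⊕ Ee // Inc ends extEnd v e}) → X e.1) → ℂ)
    (Φ Φhat : X (.inl e0) → Y → ℂ) (xe : ∀ j : Ee, X (.inr j)) :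
    Zfun (Xins X Y e0) (endsIns ends e0) (extEndIns extEnd) (fIns X Y ends extEnd e0 f Φ Φhat) xe
      = ∑ xi, ∑ y, ∑ z, ∏ w, fIns X Y ends extEnd e0 f Φ Φhat w
          (fun e => combine (cfgIns X Y e0 xi y z) xe e.1) := by
  unfold Zfun
  calc _ = ∑ p : (∀ i : Ei, X (.inl i)) × Y × X (.inl e0), ∏ w, fIns X Y ends extEnd e0 f Φ Φhat w
          (fun e => combine (cfgIns X Y e0 p.1 p.2.1 p.2.2) xe e.1) :=
        (Finset.sum_equiv (cfgInsEquiv X Y e0) (by simp) fun _ _ => rfl).symm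
    _ = _ := by simp only [Fintype.sum_prod_type]

end DualInsertConfig

theorem dual_vertex_insertion_preserves_exterior_function_general {V Ei Ee : Type}
    [Fintype V] [Fintype Ei]
    (X : Ei ⊕ Ee → Type) [∀ e, Fintype (X e)] (Y : Type) [Fintype Y]
    (ends : Ei → V × V)
    (extEnd : Ee → V)
    (f : ∀ v : V, ((e : {e : Ei ⊕ Ee // Inc ends extEnd v e}) → X e.1) → ℂ)
    (e0 : Ei)
    (Φ Φhat : X (.inl e0) → Y → ℂ)
    (hdual : ∀ x x' : X (.inl e0),
      ∑ y : Y, Φ x y * Φhat x' y = if x = x' then 1 else 0)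
    (xe : ∀ j : Ee, X (.inr j)) :
    Zfun (Xins X Y e0) (endsIns ends e0) (extEndIns extEnd)
        (fIns X Y ends extEnd e0 f Φ Φhat) xe
      = Zfun X ends extEnd f xe := by
  rw [Zfun_ins_eq_sum_cfgIns, Zfun]
  refine Fintype.sum_congr _ _ fun xi => ?_
  rw [Finset.sum_comm]
  simp only [prod_fIns_combine_cfgIns]
  rw [sum_sum_mul_of_dual Φ Φhat hdual]
  simp only [ite_self, Function.update_eq_self]

/-- **Dual Vertex Insertion preserves the exterior function.**
Let `Φ, Φ̂ : X (.inl e0) × Y → ℂ` be dual with respect to the coupling alphabet `Y`, let `G`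
be an NFG, and let `e0` be an internal edge with alphabet `X (.inl e0)` joining
`u = (ends e0).1` and `v = (ends e0).2`.  Replacing `e0` by the path
`u —(X)— Φ —(Y)— Φ̂ —(X)— v` yields an NFG `G'` with `Z_{G'} = Z_G`. -/
theorem dual_vertex_insertion_preserves_exterior_function {V Ei Ee : Type}
    [Fintype V] [Fintype Ei] [Fintype Ee]
    (X : Ei ⊕ Ee → Type) [∀ e, Fintype (X e)] (Y : Type) [Fintype Y]
    (ends : Ei → V × V) (hne : ∀ i : Ei, (ends i).1 ≠ (ends i).2)
    (extEnd : Ee → V)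
    (f : ∀ v : V, ((e : {e : Ei ⊕ Ee // Inc ends extEnd v e}) → X e.1) → ℂ)
    (e0 : Ei)
    (Φ Φhat : X (.inl e0) → Y → ℂ)
    (hdual : ∀ x x' : X (.inl e0),
      ∑ y : Y, Φ x y * Φhat x' y = if x = x' then 1 else 0)
    (xe : ∀ j : Ee, X (.inr j)) :
    Zfun (Xins X Y e0) (endsIns ends e0) (extEndIns extEnd)
        (fIns X Y ends extEnd e0 f Φ Φhat) xe
      = Zfun X ends extEnd f xe :=
  dual_vertex_insertion_preserves_exterior_function_general X Y ends extEnd f e0 Φ Φhat hdual xe
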